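/- Let a,b ≥ 3 and L = L(2,a,b) with canonical element c⃗ and dualizing element ω. Then the smallest positive integer n such that n·ω ∈ ℤ·x₁ is n = lcm(a,b); and for n = lcm(a,b) one has n·ω = m·x₁ with m = n − 2n/a − 2n/b. -/

import Mathlib

/-- The subgroup of relations defining L(a,b,c). -/
def LRel (a b c : ℕ) : AddSubgroup (ℤ × ℤ × ℤ) :=
  AddSubgroup.closure {((a : ℤ), -(b : ℤ), 0), ((0 : ℤ), (b : ℤ), -(c : ℤ))}

/-- The rank-one abelian group L(a,b,c) on generators x₁,x₂,x₃ with a·x₁ = b·x₂ = c·x₃. -/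
abbrev LGrp (a b c : ℕ) := (ℤ × ℤ × ℤ) ⧸ LRel a b c

def Lx1 (a b c : ℕ) : LGrp a b c := QuotientAddGroup.mk (1, 0, 0)
def Lx2 (a b c : ℕ) : LGrp a b c := QuotientAddGroup.mk (0, 1, 0)
def Lx3 (a b c : ℕ) : LGrp a b c := QuotientAddGroup.mk (0, 0, 1)

/-- Canonical element c⃗ = a·x₁. -/
def Lcan (a b c : ℕ) : LGrp a b c := (a : ℤ) • Lx1 a b c

/-- Dualizing element ω = c⃗ − (x₁+x₂+x₃). -/
def Lomega (a b c : ℕ) : LGrp a b c :=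
  Lcan a b c - (Lx1 a b c + Lx2 a b c + Lx3 a b c)

/-- Dominant element δ⃗ = c⃗ + 2ω. -/
def Ldelta (a b c : ℕ) : LGrp a b c := Lcan a b c + (2 : ℤ) • Lomega a b c

/-- The partial order on L given by the positive cone ℕx₁+ℕx₂+ℕx₃ : u ≤ v iff v−u ∈ ℕx₁+ℕx₂+ℕx₃. -/
def Lle (a b c : ℕ) (u v : LGrp a b c) : Prop :=
  ∃ n1 n2 n3 : ℕ,
    v - u = (n1 : ℤ) • Lx1 a b c + (n2 : ℤ) • Lx2 a b c + (n3 : ℤ) • Lx3 a b c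

/-!
Writing elements of `L(2,a,b)` as classes of `ℤ³`, we have `n • ω = [(n, -n, -n)]` and
`m • x₁ = [(m, 0, 0)]`, so `n • ω = m • x₁` says that `(m - n, n, n)` is an integer combination
`s • (2, -a, 0) + t • (0, a, -b)` of the relations. The last two coordinates force `a ∣ n` and
`b ∣ n`; conversely, for `a ∣ n` and `b ∣ n` the choice `t = -n/b`, `s = -n/a - n/b` works and
yields `m = n - 2n/a - 2n/b`.
-/

open QuotientAddGroup

lemma mem_LRel_iff {a b c : ℕ} {v : ℤ × ℤ × ℤ} :
    v ∈ LRel a b c ↔ ∃ s t : ℤ, s • ((a : ℤ), -(b : ℤ), (0 : ℤ)) + t • (0, (b : ℤ), -(c : ℤ)) = v :=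
  AddSubgroup.mem_closure_pair

lemma zsmul_Lx1 (a b c : ℕ) (m : ℤ) : m • Lx1 a b c = mk (m, 0, 0) := by
  rw [Lx1, ← mk_zsmul]
  simp

lemma zsmul_Lomega (a b c : ℕ) (n : ℤ) :
    n • Lomega a b c = mk (((a : ℤ) - 1) * n, -n, -n) := by
  simp only [Lomega, Lcan, Lx1, Lx2, Lx3, ← mk_zsmul, ← mk_add, ← mk_sub]
  congr 1
  simp only [Prod.smul_mk, smul_eq_mul, Prod.mk_add_mk, Prod.mk_sub_mk, Prod.mk.injEq]
  refine ⟨by ring, by ring, by ring⟩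

lemma zsmul_Lomega_eq_zsmul_Lx1_iff (p a b : ℕ) (n m : ℤ) :
    n • Lomega p a b = m • Lx1 p a b ↔
      ∃ s t : ℤ, s * p = m - ((p : ℤ) - 1) * n ∧ (t - s) * a = n ∧ -t * b = n := by
  rw [zsmul_Lomega, zsmul_Lx1, QuotientAddGroup.eq, mem_LRel_iff]
  simp only [Prod.smul_mk, smul_eq_mul, Prod.mk_add_mk, Prod.neg_mk, Prod.mk.injEq]
  refine exists₂_congr fun s t => ?_
  constructor <;> rintro ⟨h₁, h₂, h₃⟩ <;> refine ⟨by linarith, by linarith, by linarith⟩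

lemma dvd_of_zsmul_Lomega_eq_zsmul_Lx1 {p a b : ℕ} {n m : ℤ}
    (h : n • Lomega p a b = m • Lx1 p a b) : (a : ℤ) ∣ n ∧ (b : ℤ) ∣ n := by
  obtain ⟨s, t, -, hta, htb⟩ := (zsmul_Lomega_eq_zsmul_Lx1_iff p a b n m).1 h
  exact ⟨⟨t - s, by rw [← hta, mul_comm]⟩, ⟨-t, by rw [← htb, mul_comm]⟩⟩

lemma zsmul_Lomega_of_dvd (p a b : ℕ) {n : ℤ} (ha : (a : ℤ) ∣ n) (hb : (b : ℤ) ∣ n) :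
    n • Lomega p a b = (((p : ℤ) - 1) * n - p * (n / a) - p * (n / b)) • Lx1 p a b := by
  rw [zsmul_Lomega_eq_zsmul_Lx1_iff]
  refine ⟨-(n / a) - n / b, -(n / b), by ring, ?_, ?_⟩
  · rw [show -(n / b) - (-(n / a) - n / b) = n / a by ring, Int.ediv_mul_cancel ha]
  · rw [neg_neg, Int.ediv_mul_cancel hb]

theorem omega_multiple_of_x1_2ab_general (a b : ℕ) :
    (∀ n : ℕ, 0 < n → (∃ m : ℤ, (n : ℤ) • Lomega 2 a b = m • Lx1 2 a b) →
      Nat.lcm a b ≤ n) ∧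
    ((Nat.lcm a b : ℤ) • Lomega 2 a b =
      ((Nat.lcm a b : ℤ) - 2 * (Nat.lcm a b : ℤ) / a - 2 * (Nat.lcm a b : ℤ) / b)
        • Lx1 2 a b) := by
  constructor
  · rintro n hn ⟨m, hm⟩
    obtain ⟨hda, hdb⟩ := dvd_of_zsmul_Lomega_eq_zsmul_Lx1 hm
    exact Nat.le_of_dvd hn (Nat.lcm_dvd (Int.natCast_dvd_natCast.1 hda)
      (Int.natCast_dvd_natCast.1 hdb))
  · have hda : (a : ℤ) ∣ Nat.lcm a b := Int.natCast_dvd_natCast.2 (Nat.dvd_lcm_left a b)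
    have hdb : (b : ℤ) ∣ Nat.lcm a b := Int.natCast_dvd_natCast.2 (Nat.dvd_lcm_right a b)
    rw [zsmul_Lomega_of_dvd 2 a b hda hdb, Int.mul_ediv_assoc 2 hda, Int.mul_ediv_assoc 2 hdb]
    norm_num

/-- For weight type (2,a,b) with a,b ≥ 3: the smallest positive n with n·ω ∈ ℤ·x₁
    is n = lcm(a,b), and then n·ω = m·x₁ with m = n − 2n/a − 2n/b. -/
theorem omega_multiple_of_x1_2ab (a b : ℕ) (ha : 3 ≤ a) (hb : 3 ≤ b) :
    (∀ n : ℕ, 0 < n → (∃ m : ℤ, (n : ℤ) • Lomega 2 a b = m • Lx1 2 a b) →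
      Nat.lcm a b ≤ n) ∧
    ((Nat.lcm a b : ℤ) • Lomega 2 a b =
      ((Nat.lcm a b : ℤ) - 2 * (Nat.lcm a b : ℤ) / a - 2 * (Nat.lcm a b : ℤ) / b)
        • Lx1 2 a b) :=
  omega_multiple_of_x1_2ab_general a b
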